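/- (Cauchy's identity) For $|q| < 1$ and $|z|$ small enough (e.g. $|zq| < 1$): $\frac{1}{(zq;q)_{\infty}} = \sum_{j=0}^{\infty} \frac{z^j q^{j^2}}{(zq;q)_j (q)_j}$. -/

import Mathlib

/-!
Truncating the product gives a finite identity: with `[N, j]` the Gaussian binomial,
`∑_{j ≤ N} z^j q^{j²} [N, j] (zq^{j+1};q)_{N-j} = 1` for all `z`, by induction on `N`.
Dividing by `(zq;q)_N` turns it into
`1/(zq;q)_N = ∑_{j ≤ N} z^j q^{j²} [N, j] / (zq;q)_j`.
As `N → ∞`, `[N, j] = (q)_N / ((q)_j (q)_{N-j}) → 1/(q)_j`; the `q`-binomials and the inverses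
`1/(zq;q)_j` stay bounded because the products converge to nonzero limits, so the terms are
dominated by `C ‖zq‖^j` and Tannery's theorem passes to the limit termwise.
-/

open Finset Filter Topology

/-- `(q)ₙ = ∏_{k=1}^n (1 - q^k)` -/
noncomputable def qPoch (q : ℂ) (n : ℕ) : ℂ := ∏ k ∈ Finset.range n, (1 - q ^ (k + 1))

section QBinomial

variable {R : Type*} [CommRing R]

/-- The Gaussian binomial `[N, j]`, defined by the `q`-Pascal rule. The truncated exponent
`N - j` is harmless: it only multiplies `[N, j] = 0` when `j > N`. -/
def qBinom (q : R) : ℕ → ℕ → R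
  | _, 0 => 1
  | 0, _ + 1 => 0
  | N + 1, j + 1 => qBinom q N (j + 1) + q ^ (N - j) * qBinom q N j

@[simp] lemma qBinom_zero_right (q : R) (N : ℕ) : qBinom q N 0 = 1 := by
  cases N <;> rfl

lemma qBinom_succ_succ (q : R) (N j : ℕ) :
    qBinom q (N + 1) (j + 1) = qBinom q N (j + 1) + q ^ (N - j) * qBinom q N j :=
  rfl

lemma qBinom_eq_zero_of_lt (q : R) {N j : ℕ} (h : N < j) : qBinom q N j = 0 := by
  obtain ⟨j, rfl⟩ := Nat.exists_eq_succ_of_ne_zero (Nat.ne_zero_of_lt h)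
  induction N generalizing j with
  | zero => rfl
  | succ N ih =>
    obtain ⟨j, rfl⟩ := Nat.exists_eq_succ_of_ne_zero (by omega : j ≠ 0)
    rw [qBinom_succ_succ, ih (j + 1) (by omega), ih j (by omega), mul_zero, add_zero]

@[simp] lemma qBinom_self (q : R) (N : ℕ) : qBinom q N N = 1 := by
  induction N with
  | zero => rfl
  | succ N ih =>
    rw [qBinom_succ_succ, qBinom_eq_zero_of_lt q N.lt_succ_self, ih, Nat.sub_self, pow_zero,
      mul_one, zero_add]

lemma sum_qBinom_mul_prod_Ico (q : R) (N : ℕ) (z : R) :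
    ∑ j ∈ range (N + 1), z ^ j * q ^ (j ^ 2) * qBinom q N j *
      ∏ m ∈ Ico j N, (1 - z * q ^ (m + 1)) = 1 := by
  induction N generalizing z with
  | zero => simp
  | succ N ih =>
    -- By `q`-Pascal, the sum for `N + 1` is `(1 - zq^{N+1})` times the sum for `N` at `z`
    -- plus `zq^{N+1}` times the sum for `N` at `zq`.
    have hfirst : ∑ j ∈ range (N + 2), z ^ j * q ^ (j ^ 2) * qBinom q N j *
        ∏ m ∈ Ico j (N + 1), (1 - z * q ^ (m + 1)) =
        (∑ j ∈ range (N + 1), z ^ j * q ^ (j ^ 2) * qBinom q N j *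
          ∏ m ∈ Ico j N, (1 - z * q ^ (m + 1))) * (1 - z * q ^ (N + 1)) := by
      rw [sum_range_succ, qBinom_eq_zero_of_lt q N.lt_succ_self, mul_zero, zero_mul, add_zero,
        sum_mul]
      refine sum_congr rfl fun j hj => ?_
      rw [prod_Ico_succ_top (Nat.lt_succ_iff.mp (mem_range.mp hj))]
      ring
    have hsecond : ∑ j ∈ range (N + 1), z ^ (j + 1) * q ^ ((j + 1) ^ 2) *
        (q ^ (N - j) * qBinom q N j) * ∏ m ∈ Ico (j + 1) (N + 1), (1 - z * q ^ (m + 1)) =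
        z * q ^ (N + 1) * ∑ j ∈ range (N + 1), (z * q) ^ j * q ^ (j ^ 2) * qBinom q N j *
          ∏ m ∈ Ico j N, (1 - z * q * q ^ (m + 1)) := by
      rw [mul_sum]
      refine sum_congr rfl fun j hj => ?_
      obtain ⟨k, rfl⟩ := Nat.exists_eq_add_of_le (Nat.lt_succ_iff.mp (mem_range.mp hj))
      have hprod : ∏ m ∈ Ico (j + 1) (j + k + 1), (1 - z * q ^ (m + 1)) =
          ∏ m ∈ Ico j (j + k), (1 - z * q * q ^ (m + 1)) := by
        rw [← prod_Ico_add' _ j (j + k) 1]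
        exact prod_congr rfl fun m _ => by ring
      rw [hprod, Nat.add_sub_cancel_left]
      ring
    rw [sum_range_succ'] at hfirst
    rw [sum_range_succ']
    simp only [qBinom_succ_succ, qBinom_zero_right, mul_add, add_mul, sum_add_distrib] at hfirst ⊢
    linear_combination
      hfirst + hsecond + (1 - z * q ^ (N + 1)) * ih z + z * q ^ (N + 1) * ih (z * q)

lemma inv_prod_eq_sum_qBinom {K : Type*} [Field K] {z q : K}
    (hz : ∀ m, 1 - z * q ^ (m + 1) ≠ 0) (N : ℕ) :
    (∏ m ∈ range N, (1 - z * q ^ (m + 1)))⁻¹ =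
      ∑ j ∈ range (N + 1), z ^ j * q ^ (j ^ 2) * qBinom q N j /
        ∏ m ∈ range j, (1 - z * q ^ (m + 1)) := by
  calc _ = (∏ m ∈ range N, (1 - z * q ^ (m + 1)))⁻¹ *
        ∑ j ∈ range (N + 1), z ^ j * q ^ (j ^ 2) * qBinom q N j *
          ∏ m ∈ Ico j N, (1 - z * q ^ (m + 1)) := by rw [sum_qBinom_mul_prod_Ico, mul_one]
    _ = _ := by
      rw [mul_sum]
      refine sum_congr rfl fun j hj => ?_
      rw [← prod_range_mul_prod_Ico _ (Nat.lt_succ_iff.mp (mem_range.mp hj))]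
      have := prod_ne_zero_iff.2 fun m (_ : m ∈ range j) => hz m
      have := prod_ne_zero_iff.2 fun m (_ : m ∈ Ico j N) => hz m
      field_simp

end QBinomial

lemma qPoch_succ (q : ℂ) (n : ℕ) : qPoch q (n + 1) = qPoch q n * (1 - q ^ (n + 1)) :=
  prod_range_succ _ _

lemma qBinom_mul_qPoch_mul_qPoch (q : ℂ) {N j : ℕ} (h : j ≤ N) :
    qBinom q N j * (qPoch q j * qPoch q (N - j)) = qPoch q N := by
  induction N generalizing j with
  | zero => simp [Nat.le_zero.mp h, qPoch]
  | succ N ih =>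
    rcases j with _ | j
    · simp [qPoch]
    rcases (Nat.succ_le_succ_iff.mp h).eq_or_lt with rfl | hj
    · simp [qPoch]
    obtain ⟨k, rfl⟩ := Nat.exists_eq_add_of_lt hj
    have e1 : j + k + 1 + 1 - (j + 1) = k + 1 := by omega
    have e2 : j + k + 1 - (j + 1) = k := by omega
    have e3 : j + k + 1 - j = k + 1 := by omega
    have ih1 := ih (j := j + 1) (by omega)
    have ih2 := ih (j := j) (by omega)
    rw [e2] at ih1
    rw [e3, qPoch_succ q k] at ih2
    rw [qPoch_succ q j] at ih1
    rw [qBinom_succ_succ, e1, e3, qPoch_succ q (j + k + 1), qPoch_succ q k, qPoch_succ q j]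
    linear_combination (1 - q ^ (k + 1)) * ih1 + q ^ (k + 1) * (1 - q ^ (j + 1)) * ih2

section InfiniteProducts

variable {𝕜 : Type*} [NormedField 𝕜]

lemma tendsto_prod_range_one_sub [CompleteSpace 𝕜] {u : ℕ → 𝕜} (hu : Summable (‖u ·‖)) :
    Tendsto (fun n => ∏ m ∈ range n, (1 - u m)) atTop (𝓝 (∏' m, (1 - u m))) := by
  simp_rw [sub_eq_add_neg]
  exact (multipliable_one_add_of_summable (by simpa using hu)).hasProd.tendsto_prod_nat

lemma tprod_one_sub_ne_zero [CompleteSpace 𝕜] {u : ℕ → 𝕜} (hu : Summable (‖u ·‖))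
    (h : ∀ m, 1 - u m ≠ 0) : ∏' m, (1 - u m) ≠ 0 := by
  simp_rw [sub_eq_add_neg] at h ⊢
  exact tprod_one_add_ne_zero_of_summable h (by simpa using hu)

lemma summable_norm_mul_pow_succ (a : 𝕜) {q : 𝕜} (hq : ‖q‖ < 1) :
    Summable fun m : ℕ => ‖a * q ^ (m + 1)‖ := by
  simpa [pow_succ, mul_assoc, mul_comm, mul_left_comm] using
    (summable_geometric_of_lt_one (norm_nonneg q) hq).mul_left (‖a‖ * ‖q‖)

lemma one_sub_mul_pow_succ_ne_zero {a q : 𝕜} (hq : ‖q‖ ≤ 1) (ha : ‖a * q‖ < 1) (m : ℕ) :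
    1 - a * q ^ (m + 1) ≠ 0 := by
  refine sub_ne_zero.2 fun h => ?_
  have : ‖a * q ^ (m + 1)‖ ≤ ‖a * q‖ := by
    rw [pow_succ', ← mul_assoc, norm_mul, norm_pow]
    exact mul_le_of_le_one_right (norm_nonneg _) (pow_le_one₀ (norm_nonneg q) hq)
  rw [← h, norm_one] at this
  linarith

end InfiniteProducts

lemma Filter.Tendsto.exists_forall_norm_le {E : Type*} [SeminormedAddCommGroup E] {u : ℕ → E}
    {x : E} (hu : Tendsto u atTop (𝓝 x)) : ∃ C, ∀ n, ‖u n‖ ≤ C := by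
  obtain ⟨C, hC⟩ := isBounded_iff_forall_norm_le.1 (Metric.isBounded_range_of_tendsto u hu)
  exact ⟨C, fun n => hC _ (Set.mem_range_self n)⟩

section Convergence

variable {q : ℂ}

lemma tendsto_qPoch (hq : ‖q‖ < 1) : Tendsto (qPoch q) atTop (𝓝 (∏' k, (1 - q ^ (k + 1)))) :=
  tendsto_prod_range_one_sub (by simpa using summable_norm_mul_pow_succ 1 hq)

lemma tprod_one_sub_pow_succ_ne_zero (hq : ‖q‖ < 1) : ∏' k, (1 - q ^ (k + 1)) ≠ 0 :=
  tprod_one_sub_ne_zero (by simpa using summable_norm_mul_pow_succ 1 hq)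
    (by simpa using one_sub_mul_pow_succ_ne_zero (a := 1) hq.le (by simpa using hq))

lemma qPoch_ne_zero (hq : ‖q‖ < 1) (n : ℕ) : qPoch q n ≠ 0 :=
  prod_ne_zero_iff.2 fun k _ => by
    simpa using one_sub_mul_pow_succ_ne_zero (a := 1) hq.le (by simpa using hq) k

lemma qBinom_eq_div (hq : ‖q‖ < 1) {N j : ℕ} (h : j ≤ N) :
    qBinom q N j = qPoch q N / (qPoch q j * qPoch q (N - j)) := by
  rw [← qBinom_mul_qPoch_mul_qPoch q h,
    mul_div_cancel_right₀ _ (mul_ne_zero (qPoch_ne_zero hq j) (qPoch_ne_zero hq (N - j)))]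

lemma tendsto_qBinom (hq : ‖q‖ < 1) (j : ℕ) :
    Tendsto (fun N => qBinom q N j) atTop (𝓝 (qPoch q j)⁻¹) := by
  have hP := tendsto_qPoch hq
  have hP0 := tprod_one_sub_pow_succ_ne_zero hq
  have hlim := hP.div ((hP.comp (tendsto_sub_atTop_nat j)).const_mul (qPoch q j))
    (mul_ne_zero (qPoch_ne_zero hq j) hP0)
  rw [div_mul_cancel_right₀ hP0] at hlim
  refine hlim.congr' ((eventually_ge_atTop j).mono fun N hN => ?_)
  exact (qBinom_eq_div hq hN).symm

lemma exists_forall_norm_qBinom_le (hq : ‖q‖ < 1) : ∃ B, ∀ N j, ‖qBinom q N j‖ ≤ B := by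
  obtain ⟨M, hM⟩ := (tendsto_qPoch hq).exists_forall_norm_le
  obtain ⟨C, hC⟩ :=
    ((tendsto_qPoch hq).inv₀ (tprod_one_sub_pow_succ_ne_zero hq)).exists_forall_norm_le
  have hM0 : 0 ≤ M := (norm_nonneg _).trans (hM 0)
  have hC0 : 0 ≤ C := (norm_nonneg _).trans (hC 0)
  refine ⟨M * (C * C), fun N j => ?_⟩
  rcases le_or_gt j N with h | h
  · rw [qBinom_eq_div hq h, div_eq_mul_inv, mul_inv, norm_mul, norm_mul]
    gcongr
    exacts [hM N, hC j, hC (N - j)]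
  · rw [qBinom_eq_zero_of_lt q h, norm_zero]
    positivity

end Convergence

lemma norm_pow_mul_pow_sq_le {z q : ℂ} (hq : ‖q‖ ≤ 1) (j : ℕ) :
    ‖z ^ j * q ^ (j ^ 2)‖ ≤ ‖z * q‖ ^ j := by
  rw [norm_mul, norm_pow, norm_pow, norm_mul, mul_pow]
  exact mul_le_mul_of_nonneg_left
    (pow_le_pow_of_le_one (norm_nonneg q) hq (Nat.le_self_pow two_ne_zero j)) (by positivity)

lemma tendsto_inv_prod_one_sub_mul_pow_succ {z q : ℂ} (hq : ‖q‖ < 1) (hzq : ‖z * q‖ < 1) :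
    Tendsto (fun N => (∏ m ∈ range N, (1 - z * q ^ (m + 1)))⁻¹) atTop
      (𝓝 (∑' j : ℕ, z ^ j * q ^ (j ^ 2) /
        ((∏ m ∈ range j, (1 - z * q ^ (m + 1))) * qPoch q j))) := by
  have hz := one_sub_mul_pow_succ_ne_zero hq.le hzq
  have hu := summable_norm_mul_pow_succ z hq
  have hsum (N : ℕ) : (∏ m ∈ range N, (1 - z * q ^ (m + 1)))⁻¹ = ∑' j, z ^ j * q ^ (j ^ 2) *
      qBinom q N j / ∏ m ∈ range j, (1 - z * q ^ (m + 1)) := by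
    rw [inv_prod_eq_sum_qBinom hz, tsum_eq_sum fun j hj => ?_]
    rw [qBinom_eq_zero_of_lt q (by simpa using hj), mul_zero, zero_div]
  obtain ⟨B, hB⟩ := exists_forall_norm_qBinom_le hq
  obtain ⟨C, hC⟩ := ((tendsto_prod_range_one_sub hu).inv₀
    (tprod_one_sub_ne_zero hu hz)).exists_forall_norm_le
  simp_rw [hsum]
  refine tendsto_tsum_of_dominated_convergence (bound := fun j => ‖z * q‖ ^ j * B * C)
    ((summable_geometric_of_lt_one (norm_nonneg _) hzq).mul_right _ |>.mul_right _)
    (fun j => ?_) (.of_forall fun N j => ?_)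
  · have := ((tendsto_qBinom hq j).const_mul (z ^ j * q ^ (j ^ 2))).div_const
      (∏ m ∈ range j, (1 - z * q ^ (m + 1)))
    convert this using 2
    ring
  · rw [div_eq_mul_inv, norm_mul, norm_mul]
    have hB0 : 0 ≤ B := (norm_nonneg _).trans (hB 0 0)
    exact mul_le_mul (mul_le_mul (norm_pow_mul_pow_sq_le hq.le j) (hB N j) (norm_nonneg _)
      (by positivity)) (hC j) (norm_nonneg _) (by positivity)

/-- Cauchy's identity: `1/(zq;q)_∞ = ∑_{j≥0} z^j q^{j²} / ((zq;q)_j (q)_j)`. -/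
theorem cauchy_identity (z q : ℂ) (hq : ‖q‖ < 1) (hzq : ‖z * q‖ < 1) :
    (∏' m : ℕ, (1 - z * q ^ (m + 1)))⁻¹ =
      ∑' j : ℕ, z ^ j * q ^ (j ^ 2) /
        ((∏ m ∈ Finset.range j, (1 - z * q ^ (m + 1))) * qPoch q j) := by
  have hu := summable_norm_mul_pow_succ z hq
  have hz := one_sub_mul_pow_succ_ne_zero hq.le hzq
  exact tendsto_nhds_unique ((tendsto_prod_range_one_sub hu).inv₀ (tprod_one_sub_ne_zero hu hz))
    (tendsto_inv_prod_one_sub_mul_pow_succ hq hzq)
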